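/- Let y = (y_1, ..., y_n) be a vector of n positive integer car lengths and let y⁺ = (y_1, ..., y_n, y_{n+1}) be any extension of y by one additional positive integer. If x ∈ PAinv_n(y), then (1, x) (the vector obtained by prepending an entry 1 to x) is in PAinv_{n+1}(y⁺). In particular, the map x ↦ (1, x) is an injection from PAinv↑_n(y) into PAinv↑_{n+1}(y⁺). -/

import Mathlib

/-- Car with preference `pref` and length `len` fits at spot `s`:
`pref ≤ s`, the spots `s, s+1, ..., s+len-1` all lie in the lot `[1, m]`,
and none of them is occupied. -/
def FitsAt (occ : Finset ℕ) (m pref len s : ℕ) : Prop :=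
  pref ≤ s ∧ s + len ≤ m + 1 ∧ ∀ t ∈ Finset.Ico s (s + len), t ∉ occ

/-- The car parks at `s`: `s` is the least spot (≥ its preference) where it fits. -/
def ParksAt (occ : Finset ℕ) (m pref len s : ℕ) : Prop :=
  FitsAt occ m pref len s ∧ ∀ s' < s, ¬ FitsAt occ m pref len s'

/-- Every car in the list of (preference, length) pairs can park, with
cars entering in order, starting from the set `occ` of occupied spots. -/
inductive Park (m : ℕ) : Finset ℕ → List (ℕ × ℕ) → Prop
  | nil (occ : Finset ℕ) : Park m occ []
  | cons (occ : Finset ℕ) (pref len : ℕ) (rest : List (ℕ × ℕ)) (s : ℕ) :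
      ParksAt occ m pref len s →
      Park m (occ ∪ Finset.Ico s (s + len)) rest →
      Park m occ ((pref, len) :: rest)

/-- `x` is a parking assortment for the length vector `y`. -/
def PA (y x : List ℕ) : Prop :=
  x.length = y.length ∧ (∀ v ∈ x, 1 ≤ v ∧ v ≤ y.sum) ∧ Park y.sum ∅ (x.zip y)

/-- `x` is a (permutation) invariant parking assortment for `y`. -/
def PAinv (y x : List ℕ) : Prop :=
  ∀ x' : List ℕ, x.Perm x' → PA y x'

/-- The degree of `x`: the number of entries of `x` different from 1. -/
def deg (x : List ℕ) : ℕ := (x.filter (fun v => v ≠ 1)).length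

/-- The characteristic of `y`: the greatest degree over all invariant
parking assortments for `y`. -/
noncomputable def chi (y : List ℕ) : ℕ := sSup {d | ∃ x, PAinv y x ∧ deg x = d}

/-- The invariant solution set of `y`. -/
def Wset (y : List ℕ) : Set ℕ :=
  {w | PAinv y (List.replicate (y.length - 1) 1 ++ [w])}

/-!
Write a rearrangement of `(1, x)` as `(z, w)`, with `w` the preference of the last car, of
length `c`. The list `z` is a rearrangement of `x` with one entry lowered to `1` (or of `x` itself
when `w = 1`), and lowering an entry of an invariant assortment to at most its minimum keeps it
invariant. So the first `n` cars park and fill the spots `[1, m]`, `m = y₁ + ⋯ + yₙ`, exactly,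
and the last car then parks at `m + 1` whatever `w` is.
-/

open Finset

theorem List.zip_append_eq_zip_take_append_zip_drop {α β : Type*} :
    ∀ (l₁ l₂ : List α) (L : List β),
      (l₁ ++ l₂).zip L = l₁.zip (L.take l₁.length) ++ l₂.zip (L.drop l₁.length)
  | [], _, _ => by simp
  | _ :: _, _, [] => by simp
  | _ :: l₁, l₂, _ :: L => by simp [List.zip_append_eq_zip_take_append_zip_drop l₁ l₂ L]

section Parking

variable {m : ℕ} {occ : Finset ℕ} {p q l s : ℕ}

theorem FitsAt.of_pref_le (h : FitsAt occ m p l s) (hqp : q ≤ p) : FitsAt occ m q l s :=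
  ⟨hqp.trans h.1, h.2⟩

theorem FitsAt.exists_parksAt (h : FitsAt occ m p l s) : ∃ t, ParksAt occ m p l t := by
  classical
  have hex : ∃ t, FitsAt occ m p l t := ⟨s, h⟩
  exact ⟨Nat.find hex, Nat.find_spec hex, fun _ => Nat.find_min hex⟩

theorem ParksAt.unique {t : ℕ} (hs : ParksAt occ m p l s) (ht : ParksAt occ m p l t) : s = t := by
  by_contra hne
  rcases Nat.lt_or_gt_of_ne hne with hlt | hlt
  · exact ht.2 s hlt hs.1
  · exact hs.2 t hlt ht.1

theorem ParksAt.of_pref_le_of_le (h : ParksAt occ m p l s) (hpq : p ≤ q) (hqs : q ≤ s) :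
    ParksAt occ m q l s :=
  ⟨⟨hqs, h.1.2⟩, fun t ht hfit => h.2 t ht (hfit.of_pref_le hpq)⟩

theorem ParksAt.mono_lot {m' : ℕ} (h : ParksAt occ m p l s) (hm : m ≤ m') :
    ParksAt occ m' p l s := by
  have := h.1.2.1
  exact ⟨⟨h.1.1, by omega, h.1.2.2⟩, fun t ht hfit => h.2 t ht ⟨hfit.1, by omega, hfit.2.2⟩⟩

theorem ParksAt.disjoint (h : ParksAt occ m p l s) : Disjoint occ (Ico s (s + l)) :=
  disjoint_right.2 h.1.2.2

end Parking

inductive ParkRun (m : ℕ) : Finset ℕ → List (ℕ × ℕ) → Finset ℕ → Prop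
  | nil (C : Finset ℕ) : ParkRun m C [] C
  | cons (C : Finset ℕ) (pref len : ℕ) (P : List (ℕ × ℕ)) (s : ℕ) (C' : Finset ℕ) :
      ParksAt C m pref len s → ParkRun m (C ∪ Ico s (s + len)) P C' →
      ParkRun m C ((pref, len) :: P) C'

namespace ParkRun

variable {m : ℕ} {C C' : Finset ℕ} {P : List (ℕ × ℕ)}

theorem unique {C₁ : Finset ℕ} (h : ParkRun m C P C') (h₁ : ParkRun m C P C₁) : C' = C₁ := by
  induction h with
  | nil => cases h₁; rfl
  | cons _ _ _ _ _ _ hp _ ih =>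
    cases h₁ with
    | cons _ _ _ _ t _ hq hrest =>
      obtain rfl := hp.unique hq
      exact ih hrest

theorem park (h : ParkRun m C P C') : Park m C P := by
  induction h with
  | nil C => exact Park.nil C
  | cons _ _ _ _ _ _ hp _ ih => exact Park.cons _ _ _ _ _ hp ih

theorem park_append {P₂ : List (ℕ × ℕ)} (h : ParkRun m C P C') (h₂ : Park m C' P₂) :
    Park m C (P ++ P₂) := by
  induction h with
  | nil => exact h₂
  | cons _ _ _ _ _ _ hp _ ih => exact Park.cons _ _ _ _ _ hp (ih h₂)

theorem mono_lot {m' : ℕ} (h : ParkRun m C P C') (hm : m ≤ m') : ParkRun m' C P C' := by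
  induction h with
  | nil C => exact nil C
  | cons _ _ _ _ _ _ hp _ ih => exact cons _ _ _ _ _ _ (hp.mono_lot hm) ih

theorem card_eq (h : ParkRun m C P C') : C'.card = C.card + (P.map Prod.snd).sum := by
  induction h with
  | nil => simp
  | cons _ _ len _ s _ hp _ ih =>
    rw [ih, card_union_of_disjoint hp.disjoint, Nat.card_Ico]
    simp only [List.map_cons, List.sum_cons]
    omega

theorem subset_Icc (h : ParkRun m C P C') (hC : C ⊆ Icc 1 m) (hP : ∀ pr ∈ P, 1 ≤ pr.1) :
    C' ⊆ Icc 1 m := by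
  induction h with
  | nil => exact hC
  | cons _ pref len _ s _ hp _ ih =>
    refine ih (union_subset hC fun t ht => ?_) fun pr hpr => hP pr (List.mem_cons_of_mem _ hpr)
    have := hP (pref, len) List.mem_cons_self
    have := hp.1.1
    have := hp.1.2.1
    simp only [mem_Ico, mem_Icc] at ht ⊢
    omega

theorem not_mem_of_lt {s : ℕ} (h : ParkRun m C P C') (hs : s ∉ C) (hP : ∀ pr ∈ P, s < pr.1) :
    s ∉ C' := by
  induction h with
  | nil => exact hs
  | cons _ pref len _ t _ hp _ ih =>
    refine ih ?_ fun pr hpr => hP pr (List.mem_cons_of_mem _ hpr)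
    have := hP (pref, len) List.mem_cons_self
    have := hp.1.1
    simp only [mem_union, mem_Ico, not_or]
    exact ⟨hs, by omega⟩

end ParkRun

theorem park_iff_exists_parkRun {m : ℕ} {C : Finset ℕ} {P : List (ℕ × ℕ)} :
    Park m C P ↔ ∃ C', ParkRun m C P C' := by
  refine ⟨fun h => ?_, fun ⟨_, h⟩ => h.park⟩
  induction h with
  | nil C => exact ⟨C, .nil C⟩
  | cons _ _ _ _ _ hp _ ih =>
    obtain ⟨C', h⟩ := ih
    exact ⟨C', .cons _ _ _ _ _ _ hp h⟩

theorem Park.exists_parkRun_of_append {m : ℕ} {C : Finset ℕ} {P₂ : List (ℕ × ℕ)} :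
    ∀ {P₁ : List (ℕ × ℕ)}, Park m C (P₁ ++ P₂) → ∃ C₁, ParkRun m C P₁ C₁ ∧ Park m C₁ P₂
  | [], h => ⟨C, .nil C, h⟩
  | (_, _) :: _, .cons _ _ _ _ _ hp hrest =>
    have ⟨C₁, hrun, h₂⟩ := Park.exists_parkRun_of_append hrest
    ⟨C₁, .cons _ _ _ _ _ _ hp hrun, h₂⟩

def FillsLot (m : ℕ) (C : Finset ℕ) (L : List ℕ) : Prop :=
  C ⊆ Icc 1 m ∧ C.card + L.sum = m

theorem FillsLot.of_parkRun {m : ℕ} {C C₁ : Finset ℕ} {g L : List ℕ} (hC : FillsLot m C L)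
    (h : ParkRun m C (g.zip (L.take g.length)) C₁) (hg : ∀ p ∈ g, 1 ≤ p) :
    FillsLot m C₁ (L.drop g.length) := by
  refine ⟨h.subset_Icc hC.1 fun pr hpr => hg _ (List.of_mem_zip hpr).1, ?_⟩
  rw [h.card_eq, List.map_snd_zip (by simp), ← hC.2, ← L.sum_take_add_sum_drop g.length]
  omega

theorem ParkRun.eq_Icc {m : ℕ} {C C' : Finset ℕ} {P : List (ℕ × ℕ)} (h : ParkRun m C P C')
    (hC : FillsLot m C (P.map Prod.snd)) (hP : ∀ pr ∈ P, 1 ≤ pr.1) : C' = Icc 1 m :=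
  eq_of_subset_of_card_le (h.subset_Icc hC.1 hP) (by rw [h.card_eq, hC.2, Nat.card_Icc]; omega)

theorem Park.cons_of_parksAt {m u v ℓ s : ℕ} {C : Finset ℕ} {P : List (ℕ × ℕ)}
    (h : Park m C ((u, ℓ) :: P)) (hv : ParksAt C m v ℓ s) (hvu : v ≤ u) (hus : u ≤ s) :
    Park m C ((v, ℓ) :: P) := by
  cases h with
  | cons _ _ _ _ t hu hrest =>
    obtain rfl := hu.unique (hv.of_pref_le_of_le hvu hus)
    exact .cons _ _ _ _ _ hv hrest

theorem Park.min_le {m s : ℕ} {C : Finset ℕ} {D L : List ℕ} (h : Park m C (D.zip L))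
    (hD : D ≠ []) (hC : FillsLot m C L) (hlen : L.length ≤ D.length) (hs : s ∈ Icc 1 m)
    (hsC : s ∉ C) : D.min hD ≤ s := by
  by_contra! hlt
  obtain ⟨C', hrun⟩ := park_iff_exists_parkRun.1 h
  have hpref : ∀ pr ∈ D.zip L, s < pr.1 :=
    fun pr hpr => hlt.trans_le (List.min_le_of_mem (List.of_mem_zip hpr).1)
  have hs1 : 1 ≤ s := (mem_Icc.1 hs).1
  refine hrun.not_mem_of_lt hsC hpref ?_
  rw [hrun.eq_Icc (by rwa [List.map_snd_zip hlen]) fun pr hpr => by have := hpref pr hpr; omega]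
  exact hs

/-- Lengths are attached to arrival positions, not to preferences. -/
def ParksInAnyOrder (m : ℕ) (C : Finset ℕ) (D L : List ℕ) : Prop :=
  ∀ d : List ℕ, d.Perm D → Park m C (d.zip L)

namespace ParksInAnyOrder

variable {m : ℕ} {C : Finset ℕ} {D L : List ℕ}

theorem perm {D' : List ℕ} (h : ParksInAnyOrder m C D L) (hD : D.Perm D') :
    ParksInAnyOrder m C D' L :=
  fun d hd => h d (hd.trans hD.symm)

/-- Parking is deterministic, so a common first block `g` always leaves the same lot behind. -/
theorem exists_parkRun_take {g : List ℕ} (h : ParksInAnyOrder m C (g ++ D) L) :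
    ∃ C₁, ParkRun m C (g.zip (L.take g.length)) C₁ ∧
      ParksInAnyOrder m C₁ D (L.drop g.length) := by
  have split : ∀ d : List ℕ, d.Perm D → ∃ C₁, ParkRun m C (g.zip (L.take g.length)) C₁ ∧
      Park m C₁ (d.zip (L.drop g.length)) := fun d hd => by
    have := h (g ++ d) (hd.append_left g)
    rw [List.zip_append_eq_zip_take_append_zip_drop] at this
    exact this.exists_parkRun_of_append
  obtain ⟨C₁, hrun, -⟩ := split D (.refl D)
  refine ⟨C₁, hrun, fun d hd => ?_⟩
  obtain ⟨C₂, hrun₂, hpark⟩ := split d hd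
  rwa [hrun.unique hrun₂]

/-- If the lowered car `v` parks at a spot `s < u`, then, the lot ending up full, the smallest
preference `u'` is `≤ s` as well, so `u'` would also park at `s`; letting `u'` arrive first
reduces the claim to the shorter list `u :: f₂` with `u'` lowering `u`. -/
theorem park_cons_of_le {C : Finset ℕ} {L f : List ℕ} {u v : ℕ}
    (H : ParksInAnyOrder m C (u :: f) L) (hfill : FillsLot m C L) (hlen : L.length = f.length + 1)
    (hL : ∀ l ∈ L, 1 ≤ l) (hv1 : 1 ≤ v) (hv : ∀ p ∈ u :: f, v ≤ p) :
    Park m C ((v :: f).zip L) := by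
  obtain ⟨ℓ, L', rfl⟩ := List.exists_cons_of_length_eq_add_one hlen
  have hℓ : 1 ≤ ℓ := hL ℓ List.mem_cons_self
  have hvu : v ≤ u := hv u List.mem_cons_self
  have hu : Park m C ((u, ℓ) :: f.zip L') := H (u :: f) (.refl _)
  obtain ⟨s, hvs⟩ : ∃ s, ParksAt C m v ℓ s := by
    cases hu with | cons _ _ _ _ _ ht _ => exact (ht.1.of_pref_le hvu).exists_parksAt
  by_cases hus : u ≤ s
  · exact hu.cons_of_parksAt hvs hvu hus
  set u' := (u :: f).min (List.cons_ne_nil u f)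
  have hu'_le : ∀ p ∈ u :: f, u' ≤ p := fun p hp => List.min_le_of_mem hp
  have hu's : u' ≤ s := by
    have hsm := hvs.1.2.1
    exact (H (u :: f) (.refl _)).min_le _ hfill (by simp [hlen])
      (mem_Icc.2 ⟨hv1.trans hvs.1.1, by omega⟩) (hvs.1.2.2 s (mem_Ico.2 ⟨le_rfl, by omega⟩))
  have hu'f : u' ∈ f := by
    rcases List.mem_cons.1 (List.min_mem (List.cons_ne_nil u f)) with h | h
    · omega
    · exact h
  obtain ⟨f₁, f₂, hf₁₂⟩ := List.append_of_mem hu'f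
  rw [hf₁₂] at H hlen hv hu'_le ⊢
  have hperm : ((u' :: f₁) ++ u :: f₂).Perm (u :: (f₁ ++ u' :: f₂)) :=
    (List.perm_middle.cons u').trans <|
      (List.Perm.swap u u' _).trans (List.perm_middle.symm.cons u)
  have hv' : ∀ p ∈ (u' :: f₁) ++ u :: f₂, v ≤ p := fun p hp => hv p (hperm.subset hp)
  have hu'_le' : ∀ p ∈ (u' :: f₁) ++ u :: f₂, u' ≤ p := fun p hp => hu'_le p (hperm.subset hp)
  obtain ⟨C₂, hrun, H₂⟩ := (H.perm hperm.symm).exists_parkRun_take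
  have hfill₂ := hfill.of_parkRun hrun fun p hp => hv1.trans (hv' p (List.mem_append_left _ hp))
  simp only [List.length_cons, List.take_succ_cons, List.drop_succ_cons, List.zip_cons_cons]
    at hrun H₂ hfill₂
  obtain _ | ⟨_, _, _, _, t, _, ht, hrun₁⟩ := hrun
  have hvu' : v ≤ u' := hv' u' (List.mem_append_left _ List.mem_cons_self)
  obtain rfl := ht.unique (hvs.of_pref_le_of_le hvu' hu's)
  have hpark₂ := park_cons_of_le H₂ hfill₂
    (by rw [List.length_drop]; simp only [List.length_cons, List.length_append] at hlen; omega)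
    (fun l hl => hL l (List.mem_cons_of_mem _ (List.mem_of_mem_drop hl)))
    (hv1.trans hvu') (fun p hp => hu'_le' p (List.mem_append_right _ hp))
  have := (ParkRun.cons _ _ _ _ _ _ hvs hrun₁).park_append hpark₂
  rw [← List.cons_append, List.zip_append_eq_zip_take_append_zip_drop]
  simpa using this
termination_by f.length
decreasing_by rw [hf₁₂, List.length_append, List.length_cons]; omega

theorem cons_of_le {f : List ℕ} {u v : ℕ} (H : ParksInAnyOrder m C (u :: f) L)
    (hfill : FillsLot m C L) (hlen : L.length = f.length + 1) (hL : ∀ l ∈ L, 1 ≤ l) (hv1 : 1 ≤ v)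
    (hv : ∀ p ∈ u :: f, v ≤ p) : ParksInAnyOrder m C (v :: f) L := by
  intro d hd
  obtain ⟨g₁, g₂, rfl⟩ := List.append_of_mem (hd.mem_iff.2 List.mem_cons_self)
  have hg : (g₁ ++ g₂).Perm f := (List.perm_middle.symm.trans hd).cons_inv
  have hperm : (u :: f).Perm (g₁ ++ u :: g₂) := (hg.cons u).symm.trans List.perm_middle.symm
  have hv' : ∀ p ∈ g₁ ++ u :: g₂, v ≤ p := fun p hp => hv p (hperm.symm.subset hp)
  obtain ⟨C₁, hrun, H₁⟩ := (H.perm hperm).exists_parkRun_take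
  have hpark := park_cons_of_le H₁
    (hfill.of_parkRun hrun fun p hp => hv1.trans (hv' p (List.mem_append_left _ hp)))
    (by rw [List.length_drop, hlen, ← hg.length_eq, List.length_append]; omega)
    (fun l hl => hL l (List.mem_of_mem_drop hl))
    hv1 fun p hp => hv' p (List.mem_append_right _ hp)
  rw [List.zip_append_eq_zip_take_append_zip_drop]
  exact hrun.park_append hpark

end ParksInAnyOrder

theorem ParksAt.succ_of_full {m w c : ℕ} (hw1 : 1 ≤ w) (hw : w ≤ m + 1) (hc : 0 < c) :
    ParksAt (Icc 1 m) (m + c) w c (m + 1) := by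
  refine ⟨⟨hw, by omega, fun t ht => ?_⟩, fun t ht hfit => ?_⟩
  · simp only [mem_Ico, mem_Icc] at ht ⊢
    omega
  · exact hfit.2.2 t (mem_Ico.2 ⟨le_rfl, by omega⟩) (mem_Icc.2 ⟨hw1.trans hfit.1, by omega⟩)

namespace PAinv

variable {y x : List ℕ}

theorem parksInAnyOrder (hx : PAinv y x) : ParksInAnyOrder y.sum ∅ x y :=
  fun d hd => (hx d hd.symm).2.2

theorem one_le (hx : PAinv y x) {v : ℕ} (hv : v ∈ x) : 1 ≤ v :=
  ((hx x (.refl x)).2.1 v hv).1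

theorem park_of_perm_append (hx : PAinv y x) (hy : ∀ v ∈ y, 0 < v) {z : List ℕ} {w : ℕ}
    (hzw : (z ++ [w]).Perm (1 :: x)) : Park y.sum ∅ (z.zip y) := by
  have hwz : (w :: z).Perm (1 :: x) := (List.perm_append_singleton w z).symm.trans hzw
  by_cases hw : w = 1
  · subst hw
    exact hx.parksInAnyOrder z hwz.cons_inv
  have hwx : w ∈ x := (List.mem_cons.1 (hwz.subset List.mem_cons_self)).resolve_left hw
  have hxw := List.perm_cons_erase hwx
  have hz : z.Perm (1 :: x.erase w) :=
    (hwz.trans ((hxw.cons 1).trans (.swap w 1 _))).cons_inv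
  refine (hx.parksInAnyOrder.perm hxw).cons_of_le ⟨empty_subset _, by simp⟩ ?_
    hy le_rfl (fun p hp => hx.one_le (hxw.symm.subset hp)) z hz
  rw [← (hx x (.refl x)).1, List.length_erase_of_mem hwx]
  have := List.length_pos_of_mem hwx
  omega

theorem cons_one (hx : PAinv y x) (hy : ∀ v ∈ y, 0 < v) {c : ℕ} (hc : 0 < c) :
    PAinv (y ++ [c]) (1 :: x) := by
  intro x' hx'
  obtain ⟨hlen, hbd, -⟩ := hx x (.refl x)
  have hmem : ∀ v ∈ x', v = 1 ∨ v ∈ x := fun v hv => List.mem_cons.1 (hx'.symm.subset hv)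
  refine ⟨by simp [← hx'.length_eq, hlen], fun v hv => ?_, ?_⟩
  · rw [List.sum_append, List.sum_singleton]
    rcases hmem v hv with rfl | hv
    · omega
    · have := hbd v hv
      omega
  obtain ⟨z, w, rfl⟩ : ∃ z w, x' = z ++ [w] :=
    (List.eq_nil_or_concat' x').resolve_left (by rintro rfl; simp at hx')
  have hzlen : z.length = y.length := by simpa [hlen] using hx'.length_eq.symm
  have hpos : ∀ v ∈ z ++ [w], 1 ≤ v := fun v hv => by
    rcases hmem v hv with rfl | hv
    · rfl
    · exact hx.one_le hv
  obtain ⟨C', hrun⟩ := park_iff_exists_parkRun.1 (hx.park_of_perm_append hy hx'.symm)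
  obtain rfl : C' = Icc 1 y.sum := hrun.eq_Icc ⟨empty_subset _, by simp [List.map_snd_zip, hzlen]⟩
    fun pr hpr => hpos _ (by simp [(List.of_mem_zip hpr).1])
  have hw : w ≤ y.sum + 1 := by
    rcases hmem w (by simp) with rfl | hw
    · omega
    · have := hbd w hw; omega
  rw [List.sum_append, List.sum_singleton, List.zip_append hzlen]
  exact (hrun.mono_lot (Nat.le_add_right _ _)).park_append
    (.cons _ _ _ _ _ (.succ_of_full (hpos w (by simp)) hw hc) (.nil _))

end PAinv

theorem stmt12_general (y : List ℕ)
    (hypos : ∀ v ∈ y, 0 < v) (c : ℕ) (hc : 0 < c) :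
    (∀ x : List ℕ, PAinv y x → PAinv (y ++ [c]) (1 :: x)) ∧
      Set.MapsTo (fun x : List ℕ => 1 :: x)
        {x | PAinv y x ∧ x.Pairwise (· ≤ ·)}
        {x | PAinv (y ++ [c]) x ∧ x.Pairwise (· ≤ ·)} ∧
      Set.InjOn (fun x : List ℕ => 1 :: x)
        {x | PAinv y x ∧ x.Pairwise (· ≤ ·)} := by
  refine ⟨fun x hx => hx.cons_one hypos hc, fun x ⟨hx, hsort⟩ => ⟨hx.cons_one hypos hc, ?_⟩,
    fun _ _ _ _ h => List.cons_injective h⟩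
  exact List.pairwise_cons.2 ⟨fun v hv => hx.one_le hv, hsort⟩

/-- if `x ∈ PAinv_n(y)` then `(1, x) ∈ PAinv_{n+1}(y⁺)` where
`y⁺ = (y, c)`; in particular `x ↦ (1, x)` maps `PAinv↑_n(y)` into
`PAinv↑_{n+1}(y⁺)` injectively. -/
theorem stmt12 (n : ℕ) (hn : 0 < n) (y : List ℕ) (hylen : y.length = n)
    (hypos : ∀ v ∈ y, 0 < v) (c : ℕ) (hc : 0 < c) :
    (∀ x : List ℕ, PAinv y x → PAinv (y ++ [c]) (1 :: x)) ∧
      Set.MapsTo (fun x : List ℕ => 1 :: x)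
        {x | PAinv y x ∧ x.Pairwise (· ≤ ·)}
        {x | PAinv (y ++ [c]) x ∧ x.Pairwise (· ≤ ·)} ∧
      Set.InjOn (fun x : List ℕ => 1 :: x)
        {x | PAinv y x ∧ x.Pairwise (· ≤ ·)} :=
  stmt12_general y hypos c hc
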